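/- If the symmetric matrix B is positive semidefinite, M is symmetric positive definite, D is invertible, and ker A ∩ ker B = {0}, then the condensed matrix B + Aᵀ D⁻¹ M D⁻¹ A is symmetric positive definite, hence the condensed system has a unique solution. -/

import Mathlib

open Matrix

/-- If `B` is symmetric positive semidefinite, `M` symmetric positive definite,
`D` diagonal and invertible, and `ker A ∩ ker B = {0}`, then the condensed matrix
`B + AᵀD⁻¹MD⁻¹A` is symmetric positive definite, hence the condensed system has
a unique solution. -/
theorem stmt13 {n : ℕ} (B M A D : Matrix (Fin n) (Fin n) ℝ)
    (hB : B.PosSemidef) (hM : M.PosDef)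
    (d : Fin n → ℝ) (hD : D = Matrix.diagonal d) (hd : ∀ i, d i ≠ 0)
    (hker : ∀ x : Fin n → ℝ, A.mulVec x = 0 → B.mulVec x = 0 → x = 0) :
    (B + Aᵀ * D⁻¹ * M * D⁻¹ * A).PosDef ∧
    ∀ f : Fin n → ℝ, ∃! u : Fin n → ℝ,
      (B + Aᵀ * D⁻¹ * M * D⁻¹ * A).mulVec u = f := by
  have hDinv : D⁻¹ = Matrix.diagonal (fun i => (d i)⁻¹) := by
    apply Matrix.inv_eq_right_inv
    rw [hD, Matrix.diagonal_mul_diagonal,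
      show (fun i => d i * (d i)⁻¹) = fun _ => (1:ℝ) from
        funext fun i => mul_inv_cancel₀ (hd i), Matrix.diagonal_one]
  have hDDinv : D * D⁻¹ = 1 := by
    rw [hDinv, hD, Matrix.diagonal_mul_diagonal,
      show (fun i => d i * (d i)⁻¹) = fun _ => (1:ℝ) from
        funext fun i => mul_inv_cancel₀ (hd i), Matrix.diagonal_one]
  have hDinvT : (D⁻¹)ᵀ = D⁻¹ := by rw [hDinv, Matrix.diagonal_transpose]
  set C : Matrix (Fin n) (Fin n) ℝ := D⁻¹ * A with hC
  have hrw : Aᵀ * D⁻¹ * M * D⁻¹ * A = Cᴴ * M * C := by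
    rw [hC, Matrix.conjTranspose_eq_transpose_of_trivial, Matrix.transpose_mul, hDinvT]
    noncomm_ring
  have hS : (Cᴴ * M * C).PosSemidef := hM.posSemidef.conjTranspose_mul_mul_same C
  have hKsemi : (B + Aᵀ * D⁻¹ * M * D⁻¹ * A).PosSemidef := by
    rw [hrw]; exact hB.add hS
  have hKpd : (B + Aᵀ * D⁻¹ * M * D⁻¹ * A).PosDef := by
    refine Matrix.PosDef.of_dotProduct_mulVec_pos hKsemi.isHermitian (fun x hx => ?_)
    rcases lt_or_eq_of_le (hKsemi.dotProduct_mulVec_nonneg x) with h | h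
    · exact h
    exfalso
    have hxq : star x ⬝ᵥ (B + Aᵀ * D⁻¹ * M * D⁻¹ * A) *ᵥ x = 0 := h.symm
    rw [hrw, Matrix.add_mulVec, dotProduct_add] at hxq
    have h1 : star x ⬝ᵥ B *ᵥ x = 0 ∧ star x ⬝ᵥ (Cᴴ * M * C) *ᵥ x = 0 := by
      constructor
      · linarith [hB.dotProduct_mulVec_nonneg x, hS.dotProduct_mulVec_nonneg x]
      · linarith [hB.dotProduct_mulVec_nonneg x, hS.dotProduct_mulVec_nonneg x]
    have hBx : B *ᵥ x = 0 := (hB.dotProduct_mulVec_zero_iff x).mp h1.1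
    have hCx : C *ᵥ x = 0 := by
      have hq : star (C *ᵥ x) ⬝ᵥ M *ᵥ (C *ᵥ x) = 0 := by
        simpa only [star_mulVec, dotProduct_mulVec, vecMul_vecMul] using h1.2
      by_contra hne
      exact absurd hq (ne_of_gt (hM.dotProduct_mulVec_pos hne))
    have hAx : A *ᵥ x = 0 := by
      have : D *ᵥ (C *ᵥ x) = A *ᵥ x := by
        rw [hC, Matrix.mulVec_mulVec, ← Matrix.mul_assoc, hDDinv, Matrix.one_mul]
      rw [← this, hCx, Matrix.mulVec_zero]
    exact hx (hker x hAx hBx)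
  refine ⟨hKpd, fun f => ?_⟩
  have hunit := hKpd.isUnit
  have hdet : IsUnit (B + Aᵀ * D⁻¹ * M * D⁻¹ * A).det :=
    (Matrix.isUnit_iff_isUnit_det _).mp hunit
  have hinj : Function.Injective ((B + Aᵀ * D⁻¹ * M * D⁻¹ * A).mulVec) :=
    Matrix.mulVec_injective_iff_isUnit.mpr hunit
  refine ⟨(B + Aᵀ * D⁻¹ * M * D⁻¹ * A)⁻¹ *ᵥ f, ?_, fun u hu => ?_⟩
  · show (B + Aᵀ * D⁻¹ * M * D⁻¹ * A) *ᵥ ((B + Aᵀ * D⁻¹ * M * D⁻¹ * A)⁻¹ *ᵥ f) = f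
    rw [Matrix.mulVec_mulVec, Matrix.mul_nonsing_inv _ hdet, Matrix.one_mulVec]
  · apply hinj
    rw [hu, Matrix.mulVec_mulVec, Matrix.mul_nonsing_inv _ hdet, Matrix.one_mulVec]
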